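/- Let U ⊆ ℝ² be open and let u : U → ℝ be a smooth solution of Liouville's equation u_{tx} + e^u = 0 on U. Define K(t,x) := (2·u_{tt}(t,x) − u_t(t,x)²)·e^{−2u(t,x)}. Then ∂K/∂x + 2·u_x·K = 0 everywhere on U; equivalently, ∂/∂x (2·u_{tt} − u_t²) = 0 on U, so that 2u_{tt} − u_t² is a function of t alone along every solution. -/

import Mathlib

open Real

/-- Partial derivative of a function of two real variables w.r.t. its first argument. -/
noncomputable def d1 (f : ℝ → ℝ → ℝ) (a b : ℝ) : ℝ := deriv (fun s => f s b) a

/-- Partial derivative of a function of two real variables w.r.t. its second argument. -/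
noncomputable def d2 (f : ℝ → ℝ → ℝ) (a b : ℝ) : ℝ := deriv (fun s => f a s) b

/-- A function of two real variables is smooth (infinitely differentiable). -/
def Smooth2 (f : ℝ → ℝ → ℝ) : Prop := ContDiff ℝ (⊤ : ℕ∞) (fun p : ℝ × ℝ => f p.1 p.2)

/-- A function of two real variables is smooth on a set `U ⊆ ℝ²`. -/
def Smooth2On (f : ℝ → ℝ → ℝ) (U : Set (ℝ × ℝ)) : Prop :=
  ContDiffOn ℝ (⊤ : ℕ∞) (fun p : ℝ × ℝ => f p.1 p.2) U

/-!
Clairaut's theorem turns Liouville's equation into `u_{xt} = -e^u`. Differentiating in `t` and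
commuting the derivatives once more gives `u_{ttx} = -e^u u_t`, hence
`∂_x (2u_{tt} - u_t²) = 2u_{ttx} - 2u_t u_{tx} = 0`. Since `K = (2u_{tt} - u_t²) e^{-2u}` with an
`x`-independent first factor, `∂_x K = -2 u_x K`.
-/

section PartialDerivatives

open Function Filter Set Topology

variable {E : Type*} [NormedAddCommGroup E] [NormedSpace ℝ E] {a b : ℝ}

lemma hasDerivAt_slice_fst {f : ℝ → ℝ → E} (hf : DifferentiableAt ℝ (uncurry f) (a, b)) :
    HasDerivAt (fun s => f s b) (fderiv ℝ (uncurry f) (a, b) (1, 0)) a :=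
  (hf.hasFDerivAt.comp_hasDerivAt a ((hasDerivAt_id' a).prodMk (hasDerivAt_const a b)) :)

lemma hasDerivAt_slice_snd {f : ℝ → ℝ → E} (hf : DifferentiableAt ℝ (uncurry f) (a, b)) :
    HasDerivAt (fun s => f a s) (fderiv ℝ (uncurry f) (a, b) (0, 1)) b :=
  (hf.hasFDerivAt.comp_hasDerivAt b ((hasDerivAt_const b a).prodMk (hasDerivAt_id' b)) :)

variable {f g : ℝ → ℝ → ℝ}

lemma d1_eq_fderiv (hf : DifferentiableAt ℝ (uncurry f) (a, b)) :
    d1 f a b = fderiv ℝ (uncurry f) (a, b) (1, 0) :=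
  (hasDerivAt_slice_fst hf).deriv

lemma d2_eq_fderiv (hf : DifferentiableAt ℝ (uncurry f) (a, b)) :
    d2 f a b = fderiv ℝ (uncurry f) (a, b) (0, 1) :=
  (hasDerivAt_slice_snd hf).deriv

lemma hasDerivAt_d1 (hf : DifferentiableAt ℝ (uncurry f) (a, b)) :
    HasDerivAt (fun s => f s b) (d1 f a b) a :=
  (hasDerivAt_slice_fst hf).differentiableAt.hasDerivAt

lemma hasDerivAt_d2 (hf : DifferentiableAt ℝ (uncurry f) (a, b)) :
    HasDerivAt (fun s => f a s) (d2 f a b) b :=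
  (hasDerivAt_slice_snd hf).differentiableAt.hasDerivAt

lemma d1_congr {U : Set (ℝ × ℝ)} (hU : IsOpen U) (hfg : EqOn (uncurry f) (uncurry g) U)
    (hp : (a, b) ∈ U) : d1 f a b = d1 g a b := by
  have hslice : Tendsto (fun s : ℝ => (s, b)) (𝓝 a) (𝓝 (a, b)) :=
    (continuous_id.prodMk continuous_const).tendsto a
  exact ((hfg.eventuallyEq_of_mem (hU.mem_nhds hp)).comp_tendsto hslice).deriv_eq

end PartialDerivatives

lemma fderiv_apply_eq_fderiv_fderiv_of_eventuallyEq {𝕜 E F : Type*} [NontriviallyNormedField 𝕜]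
    [NormedAddCommGroup E] [NormedSpace 𝕜 E] [NormedAddCommGroup F] [NormedSpace 𝕜 F]
    {f : E → F} {g : E → F} {p v w : E} (hf : ContDiffAt 𝕜 2 f p)
    (hg : g =ᶠ[nhds p] fun q => fderiv 𝕜 f q v) :
    fderiv 𝕜 g p w = fderiv 𝕜 (fderiv 𝕜 f) p w v := by
  have hf' : DifferentiableAt 𝕜 (fderiv 𝕜 f) p :=
    (hf.fderiv_right (m := 1) (by norm_num)).differentiableAt (by norm_num)
  rw [hg.fderiv_eq, fderiv_clm_apply hf' (differentiableAt_const v)]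
  simp

namespace Smooth2On

open Function Set

variable {f : ℝ → ℝ → ℝ} {U : Set (ℝ × ℝ)}

lemma contDiffAt (hf : Smooth2On f U) (hU : IsOpen U) {p : ℝ × ℝ} (hp : p ∈ U) :
    ContDiffAt ℝ 2 (uncurry f) p :=
  (ContDiffOn.contDiffAt hf (hU.mem_nhds hp)).of_le (WithTop.coe_le_coe.mpr le_top)

lemma differentiableAt (hf : Smooth2On f U) (hU : IsOpen U) {p : ℝ × ℝ} (hp : p ∈ U) :
    DifferentiableAt ℝ (uncurry f) p :=
  (hf.contDiffAt hU hp).differentiableAt two_ne_zero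

lemma uncurry_d1_eqOn (hf : Smooth2On f U) (hU : IsOpen U) :
    EqOn (uncurry (d1 f)) (fun q => fderiv ℝ (uncurry f) q (1, 0)) U :=
  fun _ hq => d1_eq_fderiv (hf.differentiableAt hU hq)

lemma uncurry_d2_eqOn (hf : Smooth2On f U) (hU : IsOpen U) :
    EqOn (uncurry (d2 f)) (fun q => fderiv ℝ (uncurry f) q (0, 1)) U :=
  fun _ hq => d2_eq_fderiv (hf.differentiableAt hU hq)

lemma d1 (hf : Smooth2On f U) (hU : IsOpen U) : Smooth2On (d1 f) U :=
  (((ContDiffOn.fderiv_of_isOpen hf hU (m := (⊤ : ℕ∞)) le_rfl).clm_apply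
    contDiffOn_const).congr (hf.uncurry_d1_eqOn hU) :)

lemma d2 (hf : Smooth2On f U) (hU : IsOpen U) : Smooth2On (d2 f) U :=
  (((ContDiffOn.fderiv_of_isOpen hf hU (m := (⊤ : ℕ∞)) le_rfl).clm_apply
    contDiffOn_const).congr (hf.uncurry_d2_eqOn hU) :)

lemma d2_d1_eq_fderiv_fderiv (hf : Smooth2On f U) (hU : IsOpen U) {a b : ℝ}
    (hp : (a, b) ∈ U) :
    _root_.d2 (_root_.d1 f) a b = fderiv ℝ (fderiv ℝ (uncurry f)) (a, b) (0, 1) (1, 0) := by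
  rw [d2_eq_fderiv ((hf.d1 hU).differentiableAt hU hp)]
  exact fderiv_apply_eq_fderiv_fderiv_of_eventuallyEq (hf.contDiffAt hU hp)
    ((hf.uncurry_d1_eqOn hU).eventuallyEq_of_mem (hU.mem_nhds hp))

lemma d1_d2_eq_fderiv_fderiv (hf : Smooth2On f U) (hU : IsOpen U) {a b : ℝ}
    (hp : (a, b) ∈ U) :
    _root_.d1 (_root_.d2 f) a b = fderiv ℝ (fderiv ℝ (uncurry f)) (a, b) (1, 0) (0, 1) := by
  rw [d1_eq_fderiv ((hf.d2 hU).differentiableAt hU hp)]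
  exact fderiv_apply_eq_fderiv_fderiv_of_eventuallyEq (hf.contDiffAt hU hp)
    ((hf.uncurry_d2_eqOn hU).eventuallyEq_of_mem (hU.mem_nhds hp))

lemma d2_d1_eq_d1_d2 (hf : Smooth2On f U) (hU : IsOpen U) {a b : ℝ} (hp : (a, b) ∈ U) :
    _root_.d2 (_root_.d1 f) a b = _root_.d1 (_root_.d2 f) a b := by
  rw [hf.d2_d1_eq_fderiv_fderiv hU hp, hf.d1_d2_eq_fderiv_fderiv hU hp]
  exact ((hf.contDiffAt hU hp).isSymmSndFDerivAt (by simp)) _ _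

end Smooth2On

section Liouville

variable {U : Set (ℝ × ℝ)} {u : ℝ → ℝ → ℝ} {a b : ℝ}

lemma d2_d1_eq_neg_exp_of_liouville (hU : IsOpen U) (hu : Smooth2On u U)
    (hsol : ∀ p ∈ U, d1 (d2 u) p.1 p.2 + Real.exp (u p.1 p.2) = 0) (hp : (a, b) ∈ U) :
    d2 (d1 u) a b = -Real.exp (u a b) := by
  rw [hu.d2_d1_eq_d1_d2 hU hp]
  linarith [hsol (a, b) hp]

lemma d2_d1_d1_eq_of_liouville (hU : IsOpen U) (hu : Smooth2On u U)
    (hsol : ∀ p ∈ U, d1 (d2 u) p.1 p.2 + Real.exp (u p.1 p.2) = 0) (hp : (a, b) ∈ U) :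
    d2 (d1 (d1 u)) a b = -(Real.exp (u a b) * d1 u a b) := by
  calc d2 (d1 (d1 u)) a b = d1 (d2 (d1 u)) a b := (hu.d1 hU).d2_d1_eq_d1_d2 hU hp
    _ = d1 (fun s t => -Real.exp (u s t)) a b :=
      d1_congr hU (fun _ hq => d2_d1_eq_neg_exp_of_liouville hU hu hsol hq) hp
    _ = -(Real.exp (u a b) * d1 u a b) :=
      (hasDerivAt_d1 (hu.differentiableAt hU hp)).exp.neg.deriv

lemma hasDerivAt_two_d1_d1_sub_sq_of_liouville (hU : IsOpen U) (hu : Smooth2On u U)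
    (hsol : ∀ p ∈ U, d1 (d2 u) p.1 p.2 + Real.exp (u p.1 p.2) = 0) (hp : (a, b) ∈ U) :
    HasDerivAt (fun x => 2 * d1 (d1 u) a x - d1 u a x ^ 2) 0 b := by
  have hut := hu.d1 hU
  have h := ((hasDerivAt_d2 ((hut.d1 hU).differentiableAt hU hp)).const_mul 2).sub
    ((hasDerivAt_d2 (hut.differentiableAt hU hp)).pow 2)
  rw [d2_d1_d1_eq_of_liouville hU hu hsol hp, d2_d1_eq_neg_exp_of_liouville hU hu hsol hp] at h
  refine h.congr_deriv ?_
  ring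

end Liouville

/-- Along any smooth solution of Liouville's equation `u_{tx} + e^u = 0`, the invariant
`K = (2u_{tt} − u_t²)e^{−2u}` satisfies `∂K/∂x + 2u_x·K = 0`; equivalently
`∂/∂x (2u_{tt} − u_t²) = 0`, so `2u_{tt} − u_t²` is a function of `t` alone. -/
theorem liouville_invariant_K
    (U : Set (ℝ × ℝ)) (hU : IsOpen U)
    (u : ℝ → ℝ → ℝ) (hu : Smooth2On u U)
    (hsol : ∀ p ∈ U, d1 (d2 u) p.1 p.2 + Real.exp (u p.1 p.2) = 0)
    (K : ℝ → ℝ → ℝ)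
    (hK : ∀ t x : ℝ,
      K t x = (2 * d1 (d1 u) t x - (d1 u t x)^2) * Real.exp (-2 * u t x)) :
    (∀ p ∈ U, d2 K p.1 p.2 + 2 * d2 u p.1 p.2 * K p.1 p.2 = 0) ∧
    (∀ p ∈ U, d2 (fun t x => 2 * d1 (d1 u) t x - (d1 u t x)^2) p.1 p.2 = 0) := by
  have hS : ∀ p ∈ U, HasDerivAt (fun x => 2 * d1 (d1 u) p.1 x - d1 u p.1 x ^ 2) 0 p.2 :=
    fun p hp => hasDerivAt_two_d1_d1_sub_sq_of_liouville hU hu hsol hp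
  refine ⟨?_, fun p hp => (hS p hp).deriv⟩
  rintro ⟨t, x⟩ hp
  have hexp : HasDerivAt (fun y => Real.exp (-2 * u t y))
      (Real.exp (-2 * u t x) * (-2 * d2 u t x)) x :=
    ((hasDerivAt_d2 (hu.differentiableAt hU hp)).const_mul (-2)).exp
  have hKx : d2 K t x = 0 * Real.exp (-2 * u t x) +
      (2 * d1 (d1 u) t x - d1 u t x ^ 2) * (Real.exp (-2 * u t x) * (-2 * d2 u t x)) := by
    rw [d2, funext (hK t)]
    exact ((hS _ hp).mul hexp).deriv
  rw [hKx, hK]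
  ring
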